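/- Quotienting a Dowker relation on the X-side commutes with forming the X-side Dowker complex: for a relation R ⊆ X × Y and a partition P of X with quotient map q : X → X/P, the quotient complex C_X(R)/P equals the Dowker complex C_{X/P}(R/P) of the pushforward relation. -/

import Mathlib

theorem Finset.exists_image_eq_iff_forall_mem_exists {X Z : Type*} [DecidableEq Z] (q : X → Z)
    (P : X → Prop) (τ : Finset Z) :
    (∃ σ : Finset X, (∀ x ∈ σ, P x) ∧ σ.image q = τ) ↔ ∀ z ∈ τ, ∃ x, q x = z ∧ P x := by
  simpa only [Set.subset_def, Set.mem_image, Finset.mem_coe, Set.mem_ofPred_eq, and_comm (a := P _)] using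
    (Finset.subset_set_image_iff (f := q) (s := {x | P x}) (t := τ)).symm

theorem quotient_dowker_X_side_general {X Y Z : Type*} [DecidableEq Z] (R : X → Y → Prop)
    (q : X → Z)
    (τ : Finset Z) (hne : τ.Nonempty) :
    (∃ σ : Finset X, σ.Nonempty ∧ (∃ y : Y, ∀ x ∈ σ, R x y) ∧ σ.image q = τ) ↔
      (∃ y : Y, ∀ z ∈ τ, ∃ x : X, q x = z ∧ R x y) := by
  constructor
  · rintro ⟨σ, -, ⟨y, hy⟩, hσ⟩
    exact ⟨y, (Finset.exists_image_eq_iff_forall_mem_exists q (R · y) τ).1 ⟨σ, hy, hσ⟩⟩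
  · rintro ⟨y, hy⟩
    obtain ⟨σ, hσ, rfl⟩ := (Finset.exists_image_eq_iff_forall_mem_exists q (R · y) τ).2 hy
    exact ⟨σ, Finset.image_nonempty.1 hne, ⟨y, hσ⟩, rfl⟩

/-- Quotienting a Dowker relation on the X-side commutes with forming the
X-side Dowker complex: `C_X(R)/P = C_{X/P}(R/P)` for the pushforward relation. -/
theorem quotient_dowker_X_side {X Y Z : Type*} [DecidableEq Z] (R : X → Y → Prop)
    (q : X → Z) (hq : Function.Surjective q)
    (τ : Finset Z) (hne : τ.Nonempty) :
    (∃ σ : Finset X, σ.Nonempty ∧ (∃ y : Y, ∀ x ∈ σ, R x y) ∧ σ.image q = τ) ↔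
      (∃ y : Y, ∀ z ∈ τ, ∃ x : X, q x = z ∧ R x y) :=
  quotient_dowker_X_side_general R q τ hne
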